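/- Let p, q be relatively prime positive integers and a ∈ (0,1) with pa ∉ ℤ. The optimal covering radius of the periodic billiard trajectory γ(a, p/q) in the unit square equals max(frac(pa), 1 - frac(pa)) / √(p² + q²). -/

import Mathlib

/-!
Unfolding the square by reflections turns the trajectory into the ray `q y = p (x - a)`, `y ≥ 0`,
and the orbit into its image under `fold × fold`, where `fold t` is the distance from `t` to `2ℤ`.
Since `p` and `q` are coprime, the `(2ℤ)²`-translates of the unfolded line are exactly the lines
`q y - p x + p a ∈ 2ℤ`. A point `z` of the square, unfolded as `z` or as `-z`, is therefore within
`fold (p a ± (q z₁ - p z₀)) / √(p² + q²)` of the orbit, and the smaller of the two values is at most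
`M = max (fract (p a)) (1 - fract (p a))`. Conversely, choosing `v ∈ {0, 1}` so that `p a` is at
distance `M` from `v + 2ℤ`, Cauchy–Schwarz shows that every unfolding of `(0, v / q)` is at distance
at least `M / √(p² + q²)` from the unfolded line.
-/

open Set

/-- The folding map on one coordinate. -/
noncomputable def fold (t : ℝ) : ℝ := if Even ⌊t⌋ then Int.fract t else 1 - Int.fract t

/-- A point of the Euclidean plane. -/
noncomputable def pt (x y : ℝ) : EuclideanSpace ℝ (Fin 2) := WithLp.toLp 2 ![x, y]

/-- The orbit of the billiard trajectory γ(a, p/q) in the unit square, obtained by folding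
the unfolded ray `y = (p/q)(x - a), y ≥ 0` back into the square. -/
noncomputable def billiardOrbit (a : ℝ) (p q : ℕ) : Set (EuclideanSpace ℝ (Fin 2)) :=
  {z | ∃ x y : ℝ, 0 ≤ y ∧ y = ((p : ℝ) / q) * (x - a) ∧ z = pt (fold x) (fold y)}

/-- The unit square [0,1]² in the Euclidean plane. -/
def unitSquare : Set (EuclideanSpace ℝ (Fin 2)) :=
  {z | z 0 ∈ Icc (0:ℝ) 1 ∧ z 1 ∈ Icc (0:ℝ) 1}

/-- Optimal covering radius of a set: the infimum of r > 0 whose open r-neighborhood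
covers the unit square. -/
noncomputable def rcov (S : Set (EuclideanSpace ℝ (Fin 2))) : ℝ :=
  sInf {r : ℝ | 0 < r ∧ unitSquare ⊆ Metric.thickening r S}

lemma fold_nonneg (t : ℝ) : 0 ≤ fold t := by
  unfold fold; split <;> linarith [Int.fract_nonneg t, Int.fract_lt_one t]

lemma fold_le_one (t : ℝ) : fold t ≤ 1 := by
  unfold fold; split <;> linarith [Int.fract_nonneg t, Int.fract_lt_one t]

lemma exists_fold_eq_abs (t : ℝ) : ∃ m : ℤ, fold t = |t - 2 * m| := by
  have ht := Int.floor_add_fract t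
  have h0 := Int.fract_nonneg t
  have h1 := Int.fract_lt_one t
  unfold fold
  rcases Int.even_or_odd' ⌊t⌋ with ⟨j, hj | hj⟩
  · have hj' : (⌊t⌋ : ℝ) = 2 * j := by exact_mod_cast hj
    refine ⟨j, ?_⟩
    rw [if_pos ⟨j, by omega⟩, abs_of_nonneg (by linarith)]
    linarith
  · have hj' : (⌊t⌋ : ℝ) = 2 * j + 1 := by exact_mod_cast hj
    refine ⟨j + 1, ?_⟩
    rw [if_neg (by rw [Int.not_even_iff_odd]; exact ⟨j, hj⟩),
      abs_of_nonpos (by push_cast; linarith)]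
    push_cast; linarith

lemma fold_le_abs (t : ℝ) (k : ℤ) : fold t ≤ |t - 2 * k| := by
  obtain ⟨m, hm⟩ := exists_fold_eq_abs t
  rcases eq_or_ne k m with rfl | hkm
  · exact hm.le
  have hgap : (1 : ℝ) ≤ |(m : ℝ) - k| := by
    rw [← Int.cast_sub, ← Int.cast_abs]; exact_mod_cast Int.one_le_abs (sub_ne_zero.2 hkm.symm)
  have htri := abs_sub_abs_le_abs_sub (2 * ((m : ℝ) - k)) (t - 2 * k)
  rw [abs_mul, abs_two, show 2 * ((m : ℝ) - k) - (t - 2 * k) = -(t - 2 * m) by ring, abs_neg,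
    ← hm] at htri
  linarith [fold_le_one t]

lemma fold_eq_of_forall_le {t c : ℝ} (m : ℤ) (hm : c = |t - 2 * m|)
    (hle : ∀ k : ℤ, c ≤ |t - 2 * k|) : fold t = c := by
  obtain ⟨n, hn⟩ := exists_fold_eq_abs t
  exact le_antisymm (hm ▸ fold_le_abs t m) (hn ▸ hle n)

lemma fold_eq_self {t : ℝ} (h0 : 0 ≤ t) (h1 : t ≤ 1) : fold t = t := by
  refine fold_eq_of_forall_le 0 (by simp [abs_of_nonneg h0]) fun k => ?_
  rcases le_or_gt k 0 with hk | hk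
  · have : (k : ℝ) ≤ 0 := by exact_mod_cast hk
    exact le_abs.2 (Or.inl (by linarith))
  · have : (1 : ℝ) ≤ k := by exact_mod_cast hk
    exact le_abs.2 (Or.inr (by linarith))

lemma fold_add_two_mul (t : ℝ) (k : ℤ) : fold (t + 2 * k) = fold t := by
  obtain ⟨m, hm⟩ := exists_fold_eq_abs t
  refine fold_eq_of_forall_le (m + k) (by rw [hm]; push_cast; ring_nf) fun j => ?_
  convert fold_le_abs t (j - k) using 2
  push_cast; ring

lemma fold_neg (t : ℝ) : fold (-t) = fold t := by
  obtain ⟨m, hm⟩ := exists_fold_eq_abs t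
  refine fold_eq_of_forall_le (-m) (by rw [hm, ← abs_neg]; push_cast; ring_nf) fun j => ?_
  rw [← abs_neg]
  simpa [add_comm] using fold_le_abs t (-j)

lemma fold_sub_one (t : ℝ) : fold (t - 1) = 1 - fold t := by
  unfold fold
  rw [Int.floor_sub_one, Int.fract_sub_one]
  by_cases h : Even ⌊t⌋
  · rw [if_neg (by simpa [Int.even_sub_one] using h), if_pos h]
  · rw [if_pos (by simpa [Int.even_sub_one] using h), if_neg h]; ring

lemma max_fold_one_sub_fold (t : ℝ) :
    max (fold t) (1 - fold t) = max (Int.fract t) (1 - Int.fract t) := by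
  unfold fold
  split
  · rfl
  · rw [sub_sub_cancel, max_comm]

lemma abs_fold_sub_fold_le (s t : ℝ) : |fold s - fold t| ≤ |s - t| := by
  obtain ⟨m, hm⟩ := exists_fold_eq_abs t
  obtain ⟨n, hn⟩ := exists_fold_eq_abs s
  have hs := fold_le_abs s m
  have ht := fold_le_abs t n
  rw [abs_sub_le_iff]
  constructor
  · linarith [abs_sub_le s t (2 * m)]
  · linarith [abs_sub_le t s (2 * n), abs_sub_comm s t]

lemma min_fold_add_fold_sub_le (t u : ℝ) :
    min (fold (t + u)) (fold (t - u)) ≤ max (fold t) (1 - fold t) := by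
  obtain ⟨m, hm⟩ := exists_fold_eq_abs t
  obtain ⟨n, hn⟩ := exists_fold_eq_abs u
  have hadd : fold (t + u) ≤ |(t - 2 * m) + (u - 2 * n)| := by
    simpa [add_sub_add_comm, mul_add] using fold_le_abs (t + u) (m + n)
  have hsub : fold (t - u) ≤ |(t - 2 * m) - (u - 2 * n)| := by
    simpa [sub_sub_sub_comm, mul_sub] using fold_le_abs (t - u) (m - n)
  have hy : |u - 2 * n| ≤ 1 := hn ▸ fold_le_one u
  rw [hm]
  refine (min_le_min hadd hsub).trans ?_
  have h1 := le_max_left |t - 2 * m| (1 - |t - 2 * m|)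
  have h2 := le_max_right |t - 2 * m| (1 - |t - 2 * m|)
  rcases abs_cases (t - 2 * m) with ⟨hx, _⟩ | ⟨hx, _⟩ <;>
    rcases abs_cases (u - 2 * n) with ⟨hy', _⟩ | ⟨hy', _⟩ <;>
    first
    | exact (min_le_left _ _).trans (abs_le.2 ⟨by linarith, by linarith⟩)
    | exact (min_le_right _ _).trans (abs_le.2 ⟨by linarith, by linarith⟩)

lemma dist_pt (x y x' y' : ℝ) : dist (pt x y) (pt x' y') = √((x - x') ^ 2 + (y - y') ^ 2) := by
  simp [EuclideanSpace.dist_eq, pt, Fin.sum_univ_two, Real.dist_eq, sq_abs]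

lemma pt_fold_eq_of_mem_unitSquare {z : EuclideanSpace ℝ (Fin 2)} (hz : z ∈ unitSquare) :
    pt (fold (z 0)) (fold (z 1)) = z := by
  rw [fold_eq_self hz.1.1 hz.1.2, fold_eq_self hz.2.1 hz.2.2]
  ext i; fin_cases i <;> rfl

lemma dist_pt_fold_le (x y x' y' : ℝ) :
    dist (pt (fold x) (fold y)) (pt (fold x') (fold y')) ≤ dist (pt x y) (pt x' y') := by
  rw [dist_pt, dist_pt]
  exact Real.sqrt_le_sqrt <|
    add_le_add (sq_le_sq.2 (abs_fold_sub_fold_le _ _)) (sq_le_sq.2 (abs_fold_sub_fold_le _ _))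

lemma abs_mul_add_mul_le (α β u w : ℝ) :
    |α * u + β * w| ≤ √(α ^ 2 + β ^ 2) * √(u ^ 2 + w ^ 2) := by
  rw [← Real.sqrt_mul (by positivity)]
  exact Real.abs_le_sqrt (by nlinarith [sq_nonneg (α * w - β * u)])

lemma pt_fold_mem_billiardOrbit {p q : ℕ} (hq : 0 < q) {a x y : ℝ} (hy : 0 ≤ y)
    (hxy : q * y = p * (x - a)) : pt (fold x) (fold y) ∈ billiardOrbit a p q := by
  refine ⟨x, y, hy, ?_, rfl⟩
  field_simp
  linarith

lemma exists_mem_billiardOrbit_mul_dist_le {p q : ℕ} (hp : 0 < p) (hq : 0 < q)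
    (hpq : Nat.Coprime p q) (a x y : ℝ) :
    ∃ w ∈ billiardOrbit a p q,
      √(p ^ 2 + q ^ 2) * dist (pt (fold x) (fold y)) w ≤ fold (q * y - p * x + p * a) := by
  set S : ℝ := p ^ 2 + q ^ 2
  have hS : 0 < S := by positivity
  obtain ⟨k, hk⟩ := exists_fold_eq_abs (q * y - p * x + p * a)
  obtain ⟨u, v, huv⟩ := Nat.isCoprime_iff_coprime.2 hpq
  have huvR : (u : ℝ) * p + v * q = 1 := by exact_mod_cast huv
  set δ := q * y - p * x + p * a - 2 * k
  obtain ⟨j, hj⟩ := exists_nat_gt ((q * δ / S - y + 2 * k * v) / 2)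
  -- Translate `(x, y)` by a vector of `(2ℤ)²` so that its distance to the unfolded line becomes
  -- `|δ| = fold (q y - p x + p a)`, far enough up that the foot of the perpendicular has `y ≥ 0`.
  set X := x + 2 * (k * u + j * q : ℤ)
  set Y := y + 2 * (-(k * v) + j * p : ℤ)
  have hδ : q * Y - p * X + p * a = δ := by
    simp only [X, Y, δ]; push_cast; linear_combination (-2 * k) * huvR
  have hp1 : (1 : ℝ) ≤ p := by exact_mod_cast hp
  have hfoot : 0 ≤ Y - q * δ / S := by
    simp only [Y]; push_cast; nlinarith [(j.cast_nonneg : (0 : ℝ) ≤ j)]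
  refine ⟨_, pt_fold_mem_billiardOrbit hq hfoot (x := X + p * δ / S) ?_, ?_⟩
  · field_simp; linear_combination S * hδ
  rw [← fold_add_two_mul x, ← fold_add_two_mul y, hk]
  calc √S * dist (pt (fold X) (fold Y)) (pt (fold (X + p * δ / S)) (fold (Y - q * δ / S)))
      ≤ √S * dist (pt X Y) (pt (X + p * δ / S) (Y - q * δ / S)) := by
        gcongr; exact dist_pt_fold_le _ _ _ _
    _ = |δ| := by
        rw [dist_pt, ← Real.sqrt_mul hS.le, show S * ((X - (X + p * δ / S)) ^ 2
          + (Y - (Y - q * δ / S)) ^ 2) = δ ^ 2 by field_simp; ring, Real.sqrt_sq_eq_abs]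

lemma fold_sub_le_mul_dist {p q : ℕ} (hq : 0 < q) (a : ℝ) (v : ℤ) {w : EuclideanSpace ℝ (Fin 2)}
    (hw : w ∈ billiardOrbit a p q) :
    fold (p * a - v) ≤ √(p ^ 2 + q ^ 2) * dist (pt 0 (v / q)) w := by
  obtain ⟨x, y, -, hxy, rfl⟩ := hw
  have hline : q * y = p * (x - a) := by rw [hxy]; field_simp
  obtain ⟨m, hm⟩ := exists_fold_eq_abs x
  obtain ⟨n, hn⟩ := exists_fold_eq_abs y
  have hqv : (q : ℝ) * (v / q) = v := by field_simp
  rw [dist_pt, hm, hn, zero_sub, neg_sq, sq_abs]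
  rcases abs_cases (y - 2 * n) with ⟨hy, _⟩ | ⟨hy, _⟩ <;> rw [hy]
  · calc fold (p * a - v) ≤ |p * a - v - 2 * (p * m - q * n - v : ℤ)| := fold_le_abs _ _
      _ = |p * (x - 2 * m) + q * (v / q - (y - 2 * n))| := by
          congr 1; push_cast; linear_combination hline - hqv
      _ ≤ _ := abs_mul_add_mul_le _ _ _ _
  · calc fold (p * a - v) ≤ |p * a - v - 2 * (p * m - q * n : ℤ)| := fold_le_abs _ _
      _ = |p * (x - 2 * m) + (-q) * (v / q - -(y - 2 * n))| := by
          congr 1; push_cast; linear_combination hline + hqv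
      _ ≤ _ := by simpa using abs_mul_add_mul_le p (-q) (x - 2 * m) (v / q - -(y - 2 * n))

lemma rcov_eq_of_forall_exists_dist_le {S : Set (EuclideanSpace ℝ (Fin 2))} {R : ℝ} (hR : 0 ≤ R)
    (hnear : ∀ z ∈ unitSquare, ∃ w ∈ S, dist z w ≤ R)
    (hfar : ∃ z ∈ unitSquare, ∀ w ∈ S, R ≤ dist z w) : rcov S = R := by
  suffices h : {r : ℝ | 0 < r ∧ unitSquare ⊆ Metric.thickening r S} = Ioi R by
    rw [rcov, h, csInf_Ioi]
  ext r
  refine ⟨fun ⟨_, hcov⟩ => ?_, fun hr => ⟨hR.trans_lt hr, fun z hz => ?_⟩⟩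
  · obtain ⟨z, hz, hfar⟩ := hfar
    obtain ⟨w, hw, hzw⟩ := Metric.mem_thickening_iff.1 (hcov hz)
    exact (hfar w hw).trans_lt hzw
  · obtain ⟨w, hw, hzw⟩ := hnear z hz
    exact Metric.mem_thickening_iff.2 ⟨w, hw, hzw.trans_lt hr⟩

lemma exists_mem_billiardOrbit_dist_le {p q : ℕ} (hp : 0 < p) (hq : 0 < q)
    (hpq : Nat.Coprime p q) (a : ℝ) {z : EuclideanSpace ℝ (Fin 2)} (hz : z ∈ unitSquare) :
    ∃ w ∈ billiardOrbit a p q,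
      dist z w ≤ max (fold (p * a)) (1 - fold (p * a)) / √(p ^ 2 + q ^ 2) := by
  have hs : 0 < √((p : ℝ) ^ 2 + q ^ 2) := by positivity
  have hz' : pt (fold (-z 0)) (fold (-z 1)) = z := by
    rw [fold_neg, fold_neg, pt_fold_eq_of_mem_unitSquare hz]
  obtain ⟨w₁, hw₁, h₁⟩ := exists_mem_billiardOrbit_mul_dist_le hp hq hpq a (z 0) (z 1)
  obtain ⟨w₂, hw₂, h₂⟩ := exists_mem_billiardOrbit_mul_dist_le hp hq hpq a (-z 0) (-z 1)
  rw [pt_fold_eq_of_mem_unitSquare hz, show q * z 1 - p * z 0 + p * a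
    = p * a + (q * z 1 - p * z 0) by ring] at h₁
  rw [hz', show q * -z 1 - p * -z 0 + p * a = p * a - (q * z 1 - p * z 0) by ring] at h₂
  have hmin := min_fold_add_fold_sub_le (p * a) (q * z 1 - p * z 0)
  simp only [le_div_iff₀' hs]
  rcases min_choice (fold (p * a + (q * z 1 - p * z 0))) (fold (p * a - (q * z 1 - p * z 0)))
    with h | h <;> rw [h] at hmin
  exacts [⟨w₁, hw₁, h₁.trans hmin⟩, ⟨w₂, hw₂, h₂.trans hmin⟩]

lemma exists_mem_unitSquare_forall_le_dist {p q : ℕ} (hq : 0 < q) (a : ℝ) :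
    ∃ z ∈ unitSquare, ∀ w ∈ billiardOrbit a p q,
      max (fold (p * a)) (1 - fold (p * a)) / √(p ^ 2 + q ^ 2) ≤ dist z w := by
  have hq1 : (1 : ℝ) ≤ q := by exact_mod_cast hq
  -- `fold (p * a - v)` is the distance from `p * a` to `v + 2ℤ`: take the farther class
  obtain ⟨v, hv, hfold⟩ : ∃ v : ℤ, (v = 0 ∨ v = 1) ∧
      fold (p * a - v) = max (fold (p * a)) (1 - fold (p * a)) := by
    rcases max_choice (fold (p * a)) (1 - fold (p * a)) with h | h
    · exact ⟨0, Or.inl rfl, by simp [h]⟩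
    · exact ⟨1, Or.inr rfl, by simp [h, fold_sub_one]⟩
  have hv' : (0 : ℝ) ≤ v ∧ (v : ℝ) ≤ 1 := by rcases hv with rfl | rfl <;> norm_num
  refine ⟨pt 0 (v / q), ⟨by simp [pt], ?_⟩, fun w hw => ?_⟩
  · simpa [pt] using
      ⟨div_nonneg hv'.1 (by positivity), div_le_one_of_le₀ (hv'.2.trans hq1) (by positivity)⟩
  rw [div_le_iff₀' (by positivity), ← hfold]
  exact fold_sub_le_mul_dist hq a v hw

theorem stmt8_general (p q : ℕ) (hp : 0 < p) (hq : 0 < q) (hpq : Nat.Coprime p q)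
    (a : ℝ) :
    rcov (billiardOrbit a p q) =
      max (Int.fract ((p : ℝ) * a)) (1 - Int.fract ((p : ℝ) * a)) /
        Real.sqrt ((p : ℝ)^2 + (q : ℝ)^2) := by
  rw [← max_fold_one_sub_fold]
  exact rcov_eq_of_forall_exists_dist_le
    (div_nonneg (le_max_of_le_left (fold_nonneg _)) (by positivity))
    (fun _ hz => exists_mem_billiardOrbit_dist_le hp hq hpq a hz)
    (exists_mem_unitSquare_forall_le_dist hq a)

theorem stmt8 (p q : ℕ) (hp : 0 < p) (hq : 0 < q) (hpq : Nat.Coprime p q)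
    (a : ℝ) (ha : a ∈ Ioo (0:ℝ) 1) (hns : ¬ ∃ m : ℤ, (p : ℝ) * a = m) :
    rcov (billiardOrbit a p q) =
      max (Int.fract ((p : ℝ) * a)) (1 - Int.fract ((p : ℝ) * a)) /
        Real.sqrt ((p : ℝ)^2 + (q : ℝ)^2) :=
  stmt8_general p q hp hq hpq a
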